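/- Let Q ∈ ℝ^{n×n} be symmetric positive definite and R ∈ ℝ^{n×m} have full column rank, and ρ > 0. Then the matrix J = [[−ρQ, −R],[Rᵀ, 0]] has no eigenvalue with nonnegative real part; in particular J is invertible and Hurwitz. -/

import Mathlib

/-!
Write an eigenvector of `J = [[A, -B], [Bᴴ, 0]]` as `v = (x, y)`. The off-diagonal blocks
contribute `-z + conj z` to `v* J v`, with `z = x* B y`, so `re μ ‖v‖² = re (x* A x)`. This is
negative as soon as `x ≠ 0`, and `x = 0` forces `B y = 0`, hence `y = 0` when `B` is injective.
Over `ℂ` with `A = -ρ Q` this bounds the spectrum; over `ℝ` with `μ = 0` it gives invertibility.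
-/

open Matrix
open scoped ComplexOrder

namespace Matrix

variable {m n : Type*} [Fintype n]

theorem exists_mulVec_eq_smul_of_mem_spectrum {K : Type*} [Field K] [DecidableEq n]
    {A : Matrix n n K} {μ : K} (h : μ ∈ spectrum K A) : ∃ v ≠ 0, A *ᵥ v = μ • v := by
  rw [← spectrum_toLin', ← Module.End.hasEigenvalue_iff_mem_spectrum] at h
  obtain ⟨v, hv⟩ := h.exists_hasEigenvector
  exact ⟨v, hv.2, by simpa using hv.apply_eq_smul⟩

theorem mulVec_injective_of_rank_eq_card {K : Type*} [Field K] {A : Matrix m n K}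
    (h : A.rank = Fintype.card n) : Function.Injective A.mulVec := by
  have hker := LinearMap.finrank_range_add_finrank_ker A.mulVecLin
  rw [← rank, h, Module.finrank_fintype_fun_eq_card, add_eq_left,
    Submodule.finrank_eq_zero] at hker
  exact LinearMap.ker_eq_bot.mp hker

section RCLike

variable {𝕜 : Type*} [RCLike 𝕜]

open RCLike in
theorem re_star_dotProduct_smul (v : n → 𝕜) (μ : 𝕜) :
    re (star v ⬝ᵥ μ • v) = re μ * re (star v ⬝ᵥ v) := by
  have hv := RCLike.nonneg_iff.mp (dotProduct_star_self_nonneg v)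
  rw [dotProduct_smul, smul_eq_mul, mul_re, hv.2, mul_zero, sub_zero]

open RCLike in
theorem re_star_dotProduct_fromBlocks_mulVec [Fintype m] (A : Matrix n n 𝕜) (B : Matrix n m 𝕜)
    (x : n → 𝕜) (y : m → 𝕜) :
    re (star (Sum.elim x y) ⬝ᵥ fromBlocks A (-B) Bᴴ 0 *ᵥ Sum.elim x y) =
      re (star x ⬝ᵥ A *ᵥ x) := by
  have hskew : star y ⬝ᵥ Bᴴ *ᵥ x = star (star x ⬝ᵥ B *ᵥ y) := by
    rw [star_dotProduct, star_mulVec, conjTranspose_conjTranspose, dotProduct_mulVec]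
  simp [fromBlocks_mulVec, Function.star_sumElim, sumElim_dotProduct_sumElim, neg_mulVec,
    dotProduct_add, hskew]

open RCLike in
theorem re_star_dotProduct_neg_smul_mulVec_neg {A : Matrix n n 𝕜}
    (hA : ∀ x ≠ 0, 0 < re (star x ⬝ᵥ A *ᵥ x)) {ρ : ℝ} (hρ : 0 < ρ) :
    ∀ x ≠ 0, re (star x ⬝ᵥ (-ρ • A) *ᵥ x) < 0 := fun x hx ↦ by
  rw [smul_mulVec, dotProduct_smul, smul_re]
  exact mul_neg_of_neg_of_pos (neg_neg_of_pos hρ) (hA x hx)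

open RCLike in
theorem re_lt_zero_of_mem_spectrum_fromBlocks [Fintype m] [DecidableEq n] [DecidableEq m]
    {A : Matrix n n 𝕜} {B : Matrix n m 𝕜} (hA : ∀ x ≠ 0, re (star x ⬝ᵥ A *ᵥ x) < 0)
    (hB : Function.Injective B.mulVec) {μ : 𝕜} (hμ : μ ∈ spectrum 𝕜 (fromBlocks A (-B) Bᴴ 0)) :
    re μ < 0 := by
  obtain ⟨v, hv0, hv⟩ := exists_mulVec_eq_smul_of_mem_spectrum hμ
  obtain ⟨x, y, rfl⟩ : ∃ x y, v = Sum.elim x y := ⟨_, _, (Sum.elim_comp_inl_inr v).symm⟩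
  have hx : x ≠ 0 := by
    rintro rfl
    have hBy : B *ᵥ y = B *ᵥ 0 := by
      funext i
      simpa [fromBlocks_mulVec, neg_mulVec] using congrFun hv (Sum.inl i)
    exact hv0 (by rw [hB hBy, Sum.elim_zero_zero])
  have hquad : re μ * re (star (Sum.elim x y) ⬝ᵥ Sum.elim x y) = re (star x ⬝ᵥ A *ᵥ x) := by
    rw [← re_star_dotProduct_smul, ← hv, re_star_dotProduct_fromBlocks_mulVec]
  have hnorm : 0 < re (star (Sum.elim x y) ⬝ᵥ Sum.elim x y) :=
    (pos_iff.mp (dotProduct_star_self_pos_iff.mpr hv0)).1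
  exact neg_of_mul_neg_left (hquad ▸ hA x hx) hnorm.le

end RCLike

section OfReal

open Complex

theorem re_comp_map_ofReal_mulVec (M : Matrix m n ℝ) (x : n → ℂ) :
    re ∘ (M.map ofReal *ᵥ x) = M *ᵥ (re ∘ x) := by
  funext i
  simp [mulVec, dotProduct, re_sum]

theorem im_comp_map_ofReal_mulVec (M : Matrix m n ℝ) (x : n → ℂ) :
    im ∘ (M.map ofReal *ᵥ x) = M *ᵥ (im ∘ x) := by
  funext i
  simp [mulVec, dotProduct, im_sum]

theorem re_star_dotProduct (x w : n → ℂ) :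
    (star x ⬝ᵥ w).re = (re ∘ x) ⬝ᵥ (re ∘ w) + (im ∘ x) ⬝ᵥ (im ∘ w) := by
  simp [dotProduct, re_sum, Finset.sum_add_distrib]

theorem re_star_dotProduct_map_ofReal_mulVec (M : Matrix n n ℝ) (x : n → ℂ) :
    (star x ⬝ᵥ M.map ofReal *ᵥ x).re = (re ∘ x) ⬝ᵥ M *ᵥ (re ∘ x) + (im ∘ x) ⬝ᵥ M *ᵥ (im ∘ x) := by
  rw [re_star_dotProduct, re_comp_map_ofReal_mulVec, im_comp_map_ofReal_mulVec]

theorem PosDef.re_star_dotProduct_map_ofReal_mulVec_pos {M : Matrix n n ℝ} (hM : M.PosDef)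
    {x : n → ℂ} (hx : x ≠ 0) : 0 < (star x ⬝ᵥ M.map ofReal *ᵥ x).re := by
  have hre := hM.posSemidef.dotProduct_mulVec_nonneg (re ∘ x)
  have him := hM.posSemidef.dotProduct_mulVec_nonneg (im ∘ x)
  simp only [star_trivial] at hre him
  have hpart : re ∘ x ≠ 0 ∨ im ∘ x ≠ 0 := by
    by_contra! h
    exact hx (funext fun i ↦ Complex.ext (congrFun h.1 i) (congrFun h.2 i))
  rw [re_star_dotProduct_map_ofReal_mulVec]
  rcases hpart with h | h
  · simpa using add_pos_of_pos_of_nonneg (hM.dotProduct_mulVec_pos h) him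
  · simpa using add_pos_of_nonneg_of_pos hre (hM.dotProduct_mulVec_pos h)

theorem map_ofReal_mulVec_injective {M : Matrix m n ℝ} (hM : Function.Injective M.mulVec) :
    Function.Injective (M.map ofReal).mulVec := fun x y hxy ↦ by
  have hre : re ∘ x = re ∘ y :=
    hM <| by rw [← re_comp_map_ofReal_mulVec, hxy, re_comp_map_ofReal_mulVec]
  have him : im ∘ x = im ∘ y :=
    hM <| by rw [← im_comp_map_ofReal_mulVec, hxy, im_comp_map_ofReal_mulVec]
  exact funext fun i ↦ Complex.ext (congrFun hre i) (congrFun him i)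

end OfReal

end Matrix

open Complex in
/-- If `Q` is symmetric positive definite, `R` has full column rank, and `ρ > 0`, then
`J = [[−ρQ, −R], [Rᵀ, 0]]` has no eigenvalue with nonnegative real part; in particular `J`
is invertible and Hurwitz. -/
theorem stmt15 {n m : ℕ} (ρ : ℝ) (hρ : 0 < ρ)
    (Q : Matrix (Fin n) (Fin n) ℝ) (hQ : Q.PosDef)
    (R : Matrix (Fin n) (Fin m) ℝ) (hR : R.rank = m) :
    (∀ μ ∈ spectrum ℂ ((Matrix.fromBlocks (-ρ • Q) (-R) Rᵀ 0).map Complex.ofReal),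
      μ.re < 0) ∧
    IsUnit (Matrix.fromBlocks (-ρ • Q) (-R) Rᵀ (0 : Matrix (Fin m) (Fin m) ℝ)).det := by
  have hRinj : Function.Injective R.mulVec :=
    mulVec_injective_of_rank_eq_card (by rwa [Fintype.card_fin])
  have hJ : (fromBlocks (-ρ • Q) (-R) Rᵀ 0).map ofReal =
      fromBlocks (-ρ • Q.map ofReal) (-R.map ofReal) (R.map ofReal)ᴴ 0 := by
    rw [fromBlocks_map, Matrix.map_smul _ _ fun _ ↦ by simp [real_smul],
      Matrix.map_neg _ ofReal_neg, ← conjTranspose_eq_transpose_of_trivial,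
      conjTranspose_map _ fun _ ↦ by simp, Matrix.map_zero _ ofReal_zero]
  refine ⟨fun μ hμ ↦ ?_, ?_⟩
  · rw [hJ] at hμ
    exact re_lt_zero_of_mem_spectrum_fromBlocks
      (re_star_dotProduct_neg_smul_mulVec_neg
        (fun _ ↦ hQ.re_star_dotProduct_map_ofReal_mulVec_pos) hρ)
      (map_ofReal_mulVec_injective hRinj) hμ
  · rw [← isUnit_iff_isUnit_det, ← spectrum.zero_notMem_iff ℝ]
    intro h0
    rw [← conjTranspose_eq_transpose_of_trivial] at h0
    have := re_lt_zero_of_mem_spectrum_fromBlocks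
      (re_star_dotProduct_neg_smul_mulVec_neg (fun _ ↦ hQ.dotProduct_mulVec_pos) hρ) hRinj h0
    simp at this
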